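/- arXiv:1105.6061 — 2 statements merged into one kernel-verified Lean document; each statement's English description precedes it below -/
import Mathlib

section
/- Let X₁, X₂, … be i.i.d. real random variables with ln-moment generating condition E[exp(ω Z₁)] = 1 for the log-likelihood ratio increments Z_k, where E[Z₁] < 0 and ω > 0. Then for the random walk S_n = Z₁ + ⋯ + Z_n and any threshold c > 0, P(sup_n S_n ≥ c) ≤ exp(−ω c). -/
/-!
Since `E[exp (ω Z₁)] = 1`, the process `exp (ω S_n)` is a nonnegative martingale with mean one.
On the event `c ≤ S_n` it is at least `exp (ω c)`, so Doob's maximal inequality, with the horizon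
sent to infinity, bounds the probability of that event by `exp (-ω c)`.
-/

open MeasureTheory ProbabilityTheory Real
open scoped NNReal

namespace MeasureTheory.Filtration

variable {Ω β : Type*} {mΩ : MeasurableSpace Ω} [MeasurableSpace β]

/-- Unlike `Filtration.natural`, time `n` only sees `X k` for `k < n`, so that `X n` is independent
of it. -/
def strictNatural (X : ℕ → Ω → β) (hX : ∀ n, Measurable (X n)) : Filtration ℕ mΩ where
  seq n := ⨆ k < n, MeasurableSpace.comap (X k) inferInstance
  mono' _ _ hmn := biSup_mono fun _ hk => hk.trans_le hmn
  le' _ := iSup₂_le fun k _ => (hX k).comap_le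

variable {X : ℕ → Ω → β} {hX : ∀ n, Measurable (X n)}

lemma measurable_strictNatural {k n : ℕ} (hkn : k < n) :
    Measurable[strictNatural X hX n] (X k) :=
  (comap_measurable (X k)).mono
    (le_iSup₂ (f := fun k (_ : k < n) => MeasurableSpace.comap (X k) inferInstance) k hkn) le_rfl

end MeasureTheory.Filtration

namespace ProbabilityTheory

open MeasureTheory.Filtration

variable {Ω : Type*} {mΩ : MeasurableSpace Ω} {μ : Measure Ω}

lemma iIndepFun.indep_comap_strictNatural {β : Type*} [MeasurableSpace β] {X : ℕ → Ω → β}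
    {hX : ∀ n, Measurable (X n)} (h : iIndepFun X μ) (n : ℕ) :
    Indep (MeasurableSpace.comap (X n) inferInstance) (strictNatural X hX n) μ := by
  have h_disj := indep_iSup_of_disjoint (fun k => (hX k).comap_le) h
    (S := {n}) (T := Set.Iio n) (by simp)
  rwa [iSup_singleton] at h_disj

lemma integrable_exp_mul_of_mgf_ne_zero {X : Ω → ℝ} {t : ℝ} (h : mgf X μ t ≠ 0) :
    Integrable (fun ω => exp (t * X ω)) μ :=
  of_not_not fun hint => h (mgf_undef hint)

theorem iIndepFun.martingale_exp_mul_sum {X : ℕ → Ω → ℝ} (h : iIndepFun X μ)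
    (hX : ∀ n, Measurable (X n)) {t : ℝ} (hmgf : ∀ n, mgf (X n) μ t = 1) :
    Martingale (fun n ω => exp (t * ∑ k ∈ Finset.range n, X k ω)) (strictNatural X hX) μ := by
  have := h.isProbabilityMeasure
  have hstep_int n : Integrable (fun ω => exp (t * X n ω)) μ :=
    integrable_exp_mul_of_mgf_ne_zero (by simp [hmgf n])
  have hadapted : StronglyAdapted (strictNatural X hX)
      fun n ω => exp (t * ∑ k ∈ Finset.range n, X k ω) := fun n =>
    ((Finset.measurable_fun_sum _ fun k hk =>
      measurable_strictNatural (Finset.mem_range.1 hk)).const_mul t).exp.stronglyMeasurable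
  have hint n : Integrable (fun ω => exp (t * ∑ k ∈ Finset.range n, X k ω)) μ := by
    simpa [Finset.sum_apply] using h.integrable_exp_mul_sum hX (s := Finset.range n)
      fun k _ => hstep_int k
  refine martingale_nat hadapted hint fun n => ?_
  have hsplit : (fun ω => exp (t * ∑ k ∈ Finset.range (n + 1), X k ω)) =
      (fun ω => exp (t * ∑ k ∈ Finset.range n, X k ω)) * fun ω => exp (t * X n ω) := by
    ext ω
    simp only [Finset.sum_range_succ, mul_add, exp_add, Pi.mul_apply]
  have hstep_condExp : μ[fun ω => exp (t * X n ω) | strictNatural X hX n] =ᵐ[μ] fun _ => 1 := by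
    refine (condExp_indep_eq ((hX n).comap_le) ((strictNatural X hX).le n) ?_
      (h.indep_comap_strictNatural n)).trans ?_
    · exact ((comap_measurable (X n)).const_mul t).exp.stronglyMeasurable
    · exact Filter.EventuallyEq.of_eq (funext fun _ => hmgf n)
  rw [hsplit]
  filter_upwards [condExp_mul_of_stronglyMeasurable_left (hadapted n) (hsplit ▸ hint (n + 1))
    (hstep_int n), hstep_condExp] with ω hpull hone
  simp [hpull, hone]

end ProbabilityTheory

namespace MeasureTheory

variable {Ω : Type*} {mΩ : MeasurableSpace Ω} {μ : Measure Ω}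

theorem Submartingale.measure_exists_ge_le [IsFiniteMeasure μ]
    {f : ℕ → Ω → ℝ} {ℱ : Filtration ℕ mΩ} (hf : Submartingale f ℱ μ) (hnonneg : 0 ≤ f)
    {C ε : ℝ} (hε : 0 < ε) (hC : ∀ n, ∫ ω, f n ω ∂μ ≤ C) :
    μ {ω | ∃ n, ε ≤ f n ω} ≤ ENNReal.ofReal (C / ε) := by
  set A : ℕ → Set Ω := fun N =>
    {ω | ((ε.toNNReal : ℝ≥0) : ℝ) ≤ (Finset.range (N + 1)).sup' Finset.nonempty_range_add_one
      fun k => f k ω}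
  have hA_mono : Monotone A := by
    intro N M hNM ω hω
    simp only [A, Set.mem_ofPred_eq] at hω ⊢
    exact le_trans hω (Finset.sup'_mono _ (Finset.range_subset_range.2 (by omega)) _)
  have hA_union : {ω | ∃ n, ε ≤ f n ω} = ⋃ N, A N := by
    ext ω
    simp only [A, Real.coe_toNNReal _ hε.le, Set.mem_ofPred_eq, Set.mem_iUnion,
      Finset.le_sup'_iff, Finset.mem_range]
    exact ⟨fun ⟨n, hn⟩ => ⟨n, n, n.lt_succ_self, hn⟩, fun ⟨_, k, _, hk⟩ => ⟨k, hk⟩⟩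
  have hA_le N : μ (A N) ≤ ENNReal.ofReal (C / ε) := by
    have h_maximal : ENNReal.ofReal ε * μ (A N) ≤ ENNReal.ofReal C :=
      calc ENNReal.ofReal ε * μ (A N)
          ≤ ENNReal.ofReal (∫ ω in A N, f N ω ∂μ) := maximal_ineq hf hnonneg N
        _ ≤ ENNReal.ofReal C := ENNReal.ofReal_le_ofReal <|
          (setIntegral_le_integral (hf.integrable N) (.of_forall (hnonneg N))).trans (hC N)
    rwa [ENNReal.ofReal_div_of_pos hε,
      ENNReal.le_div_iff_mul_le (.inl (by simpa using hε)) (.inl ENNReal.ofReal_ne_top), mul_comm]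
  rw [hA_union, hA_mono.measure_iUnion]
  exact iSup_le hA_le

end MeasureTheory

theorem wald_inequality_random_walk_general
    {Ω : Type*} [MeasurableSpace Ω] (P : Measure Ω) [IsProbabilityMeasure P]
    (Z : ℕ → Ω → ℝ) (hmeas : ∀ n, Measurable (Z n))
    (hindep : iIndepFun Z P)
    (hident : ∀ n, P.map (Z n) = P.map (Z 0))
    (ω₀ : ℝ) (hω₀ : 0 < ω₀)
    (hmgf : ∫ ω, Real.exp (ω₀ * Z 0 ω) ∂P = 1)
    (c : ℝ) :
    P {x | ∃ n : ℕ, c ≤ ∑ k ∈ Finset.range n, Z k x}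
      ≤ ENNReal.ofReal (Real.exp (-ω₀ * c)) := by
  have hmgf_step n : mgf (Z n) P ω₀ = 1 :=
    (congrFun (mgf_congr_identDistrib ⟨(hmeas n).aemeasurable, (hmeas 0).aemeasurable, hident n⟩)
      ω₀).trans hmgf
  have hmean n : ∫ x, exp (ω₀ * ∑ k ∈ Finset.range n, Z k x) ∂P ≤ 1 := by
    have h_prod := hindep.mgf_sum hmeas (Finset.range n) (t := ω₀)
    rw [Finset.prod_eq_one fun k _ => hmgf_step k] at h_prod
    simp only [mgf, Finset.sum_apply] at h_prod
    exact h_prod.le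
  have hevent : {x | ∃ n : ℕ, c ≤ ∑ k ∈ Finset.range n, Z k x} ⊆
      {x | ∃ n : ℕ, exp (ω₀ * c) ≤ exp (ω₀ * ∑ k ∈ Finset.range n, Z k x)} :=
    fun x ⟨n, hn⟩ => ⟨n, exp_le_exp.2 (mul_le_mul_of_nonneg_left hn hω₀.le)⟩
  calc P {x | ∃ n : ℕ, c ≤ ∑ k ∈ Finset.range n, Z k x}
      ≤ ENNReal.ofReal (1 / exp (ω₀ * c)) :=
        (measure_mono hevent).trans <|
          (hindep.martingale_exp_mul_sum hmeas hmgf_step).submartingale.measure_exists_ge_le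
            (fun _ _ => (exp_pos _).le) (exp_pos _) hmean
    _ = ENNReal.ofReal (exp (-ω₀ * c)) := by rw [one_div, ← exp_neg, neg_mul]

/-- Lundberg/Wald-type inequality: if `Z₁, Z₂, …` are i.i.d. with negative mean
and `E[exp(ω Z₁)] = 1` for some `ω > 0`, then for the random walk
`S_n = Z₁ + ⋯ + Z_n` and any `c > 0`, `P(sup_n S_n ≥ c) ≤ exp(−ω c)`. -/
theorem wald_inequality_random_walk
    {Ω : Type*} [MeasurableSpace Ω] (P : Measure Ω) [IsProbabilityMeasure P]
    (Z : ℕ → Ω → ℝ) (hmeas : ∀ n, Measurable (Z n))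
    (hindep : iIndepFun Z P)
    (hident : ∀ n, P.map (Z n) = P.map (Z 0))
    (hint : Integrable (Z 0) P) (hmean : ∫ ω, Z 0 ω ∂P < 0)
    (ω₀ : ℝ) (hω₀ : 0 < ω₀)
    (hmgf : ∫ ω, Real.exp (ω₀ * Z 0 ω) ∂P = 1)
    (c : ℝ) (hc : 0 < c) :
    P {x | ∃ n : ℕ, c ≤ ∑ k ∈ Finset.range n, Z k x}
      ≤ ENNReal.ofReal (Real.exp (-ω₀ * c)) :=
  wald_inequality_random_walk_general P Z hmeas hindep hident ω₀ hω₀ hmgf c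
end

section
/- If Z₁, Z₂, … are i.i.d. with E[exp(ω₀ Z₁)] = 1 for some ω₀ ∈ (0,1) and E[Z₁] < 0, and τ = inf{k : C_k ≥ c} where C_k is the CUSUM statistic built from the Z's, then E[τ] ≥ exp(ω₀ c). -/
/-!
If the CUSUM statistic reaches `c` at time `k`, then `C k` is the sum of the increments since
the last time `t < k` at which it was reset to zero (or since time `0`). So the crossing event is
covered by the events "no crossing up to time `t`, and the random walk started at `t` ever climbs
to `c`". The first depends on the increments before `t`, the second on those from `t` on, so they
are independent; and since `exp (ω₀ S_n)` is a nonnegative martingale of mean one, Doob's maximal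
inequality bounds the probability of the second by `exp (-ω₀ c)`. Hence
`P(τ < ∞) ≤ exp (-ω₀ c) ∑ₜ P(τ > t) = exp (-ω₀ c) E[τ]`, while `E[τ] = ∞` if `P(τ = ∞) > 0`.
-/

open MeasureTheory ProbabilityTheory Finset Real
open scoped ENNReal

namespace ProbabilityTheory

section PastFiltration

variable {Ω β ι : Type*} {mΩ : MeasurableSpace Ω} [mβ : MeasurableSpace β]

lemma measurable_iSup_comap {X : ι → Ω → β} {S : Set ι} {i : ι} (hi : i ∈ S) :
    Measurable[⨆ j ∈ S, mβ.comap (X j)] (X i) :=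
  measurable_iff_comap_le.2 (le_iSup₂ (f := fun j (_ : j ∈ S) => mβ.comap (X j)) i hi)

lemma iIndepFun.indep_iSup_comap {P : Measure Ω} {X : ι → Ω → β} (h : iIndepFun X P)
    (hX : ∀ i, Measurable (X i)) {S T : Set ι} (hST : Disjoint S T) :
    Indep (⨆ i ∈ S, mβ.comap (X i)) (⨆ i ∈ T, mβ.comap (X i)) P :=
  indep_iSup_of_disjoint (fun i => (hX i).comap_le) ((iIndepFun_iff_iIndep _ _ _).1 h) hST

def pastFiltration (X : ℕ → Ω → β) (hX : ∀ i, Measurable (X i)) : Filtration ℕ mΩ where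
  seq n := ⨆ i ∈ Set.Iio n, mβ.comap (X i)
  mono' _ _ hnm := biSup_mono fun _ hi => lt_of_lt_of_le hi hnm
  le' _ := iSup₂_le fun i _ => (hX i).comap_le

lemma iIndepFun.measure_inter_eq_mul_of_past_future {P : Measure Ω} {X : ℕ → Ω → β}
    (h : iIndepFun X P) (hX : ∀ i, Measurable (X i)) {t : ℕ} {A B : Set Ω}
    (hA : MeasurableSet[pastFiltration X hX t] A)
    (hB : MeasurableSet[⨆ i ∈ Set.Ici t, mβ.comap (X i)] B) :
    P (A ∩ B) = P A * P B :=
  (Indep_iff _ _ _).1 (h.indep_iSup_comap hX (Set.Iio_disjoint_Ici le_rfl)) _ _ hA hB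

end PastFiltration

section ExponentialMartingale

variable {Ω : Type*} {mΩ : MeasurableSpace Ω} {P : Measure Ω} [IsFiniteMeasure P]
  {X : ℕ → Ω → ℝ} {θ : ℝ}

lemma martingale_exp_mul_partialSum (hX : ∀ i, Measurable (X i)) (hindep : iIndepFun X P)
    (hmgf : ∀ i, mgf (X i) P θ = 1) :
    Martingale (fun n ω => exp (θ * ∑ i ∈ range n, X i ω)) (pastFiltration X hX) P := by
  have hint i : Integrable (fun ω => exp (θ * X i ω)) P :=
    .of_integral_ne_zero <| show mgf (X i) P θ ≠ 0 by simp [hmgf i]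
  have hadapted n : StronglyMeasurable[pastFiltration X hX n]
      fun ω => exp (θ * ∑ i ∈ range n, X i ω) :=
    (measurable_exp.comp (measurable_const.mul (Finset.measurable_sum _
      fun i hi => measurable_iSup_comap (Set.mem_Iio.2 (mem_range.1 hi))))).stronglyMeasurable
  have hint_sum n : Integrable (fun ω => exp (θ * ∑ i ∈ range n, X i ω)) P := by
    simpa only [Finset.sum_apply] using hindep.integrable_exp_mul_sum hX fun i _ => hint i
  refine martingale_nat hadapted hint_sum fun n => ?_
  have hindep_n : Indep (.comap (X n) inferInstance) (pastFiltration X hX n) P :=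
    indep_of_indep_of_le_left
      (hindep.indep_iSup_comap hX (Set.disjoint_singleton_left.2 (lt_irrefl n)))
      (measurable_iff_comap_le.1 (measurable_iSup_comap (Set.mem_singleton n)))
  have hsplit : (fun ω => exp (θ * ∑ i ∈ range (n + 1), X i ω))
      = (fun ω => exp (θ * ∑ i ∈ range n, X i ω)) * fun ω => exp (θ * X n ω) := by
    ext ω; simp only [sum_range_succ, mul_add, exp_add, Pi.mul_apply]
  have hcond : P[fun ω => exp (θ * X n ω) | pastFiltration X hX n] =ᵐ[P] fun _ => 1 :=
    condExp_indep_eq (hX n).comap_le ((pastFiltration X hX).le n)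
      (measurable_exp.comp (measurable_const.mul (comap_measurable (X n)))).stronglyMeasurable
      hindep_n |>.trans (.of_forall fun _ => hmgf n)
  rw [hsplit]
  filter_upwards [condExp_mul_of_stronglyMeasurable_left (hadapted n)
    (hsplit ▸ hint_sum (n + 1)) (hint n), hcond] with ω h h'
  simp [h, h']

theorem ofReal_exp_mul_measure_exists_le_partialSum_le_one (hX : ∀ i, Measurable (X i))
    (hindep : iIndepFun X P) (hθ : 0 ≤ θ) (hmgf : ∀ i, mgf (X i) P θ = 1) (c : ℝ) :
    ENNReal.ofReal (exp (θ * c)) * P {ω | ∃ n, c ≤ ∑ i ∈ range n, X i ω} ≤ 1 := by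
  set M : ℕ → Ω → ℝ := fun n ω => exp (θ * ∑ i ∈ range n, X i ω)
  have hM := martingale_exp_mul_partialSum hX hindep hmgf
  rw [Set.ofPred_exists, measure_iUnion_eq_iSup_accumulate, ENNReal.mul_iSup]
  refine iSup_le fun n => ?_
  set ε := (exp (θ * c)).toNNReal
  have hsub : Set.accumulate (fun n => {ω | c ≤ ∑ i ∈ range n, X i ω}) n
      ⊆ {ω | (ε : ℝ) ≤ (range (n + 1)).sup' nonempty_range_add_one fun k => M k ω} := by
    intro ω hω
    obtain ⟨k, hkn, hk⟩ := Set.mem_accumulate.1 hω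
    rw [Set.mem_ofPred_eq, Real.coe_toNNReal _ (exp_pos _).le]
    exact le_sup'_of_le _ (mem_range.2 (Nat.lt_succ_of_le hkn))
      (exp_le_exp.2 (mul_le_mul_of_nonneg_left hk hθ))
  calc ENNReal.ofReal (exp (θ * c)) * P (Set.accumulate _ n)
      ≤ ε * P {ω | (ε : ℝ) ≤ (range (n + 1)).sup' nonempty_range_add_one fun k => M k ω} := by
        gcongr; exact le_rfl
    _ ≤ ENNReal.ofReal (∫ ω in _, M n ω ∂P) :=
        maximal_ineq hM.submartingale (fun k ω => (exp_pos _).le) n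
    _ ≤ ENNReal.ofReal (∫ ω, M n ω ∂P) :=
        ENNReal.ofReal_le_ofReal (setIntegral_le_integral (hM.integrable n)
          (.of_forall fun ω => (exp_pos _).le))
    _ = 1 := by
      have : ∫ ω, M n ω ∂P = mgf (∑ i ∈ range n, X i) P θ := by simp [M, mgf]
      rw [this, hindep.mgf_sum hX, prod_eq_one fun i _ => hmgf i, ENNReal.ofReal_one]

end ExponentialMartingale

end ProbabilityTheory

section CusumPath

variable {C z : ℕ → ℝ}

theorem exists_cusum_eq_sum_Ico (hC0 : C 0 = 0) (hC : ∀ k, C (k + 1) = max 0 (C k + z k))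
    (k : ℕ) : ∃ t ≤ k, C k = ∑ i ∈ Ico t k, z i := by
  induction k with
  | zero => exact ⟨0, le_rfl, by simp [hC0]⟩
  | succ k ih =>
    obtain ⟨t, htk, hCk⟩ := ih
    rcases le_or_gt (C k + z k) 0 with hneg | hpos
    · exact ⟨k + 1, le_rfl, by simp [hC, hneg]⟩
    · refine ⟨t, htk.trans k.le_succ, ?_⟩
      rw [hC, max_eq_right hpos.le, hCk, sum_Ico_succ_top htk]

theorem exists_partialSum_ge_of_le_cusum (hC0 : C 0 = 0)
    (hC : ∀ k, C (k + 1) = max 0 (C k + z k)) {c : ℝ} (hc : 0 < c) {k : ℕ} (hk : c ≤ C k) :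
    ∃ t, (∀ j ≤ t, ¬ c ≤ C j) ∧ ∃ m, c ≤ ∑ i ∈ range m, z (t + i) := by
  classical
  have hex : ∃ k, c ≤ C k := ⟨k, hk⟩
  obtain ⟨t, htk, hsum⟩ := exists_cusum_eq_sum_Ico hC0 hC (Nat.find hex)
  have ht : t < Nat.find hex := by
    refine htk.lt_of_ne fun h => ?_
    have := Nat.find_spec hex
    rw [hsum, h, Ico_self, sum_empty] at this
    linarith
  refine ⟨t, fun j hj => Nat.find_min hex (hj.trans_lt ht), Nat.find hex - t, ?_⟩
  rw [← sum_Ico_eq_sum_range, ← hsum]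
  exact Nat.find_spec hex

end CusumPath

theorem tsum_indicator_le_sInf_natCast_image (s : Set ℕ) :
    ∑' t : ℕ, {t | ∀ j ≤ t, j ∉ s}.indicator (1 : ℕ → ℝ≥0∞) t
      ≤ sInf ((fun k : ℕ => (k : ℝ≥0∞)) '' s) := by
  refine le_sInf ?_
  rintro _ ⟨k, hk, rfl⟩
  rw [tsum_eq_sum (s := range k) fun t ht => Set.indicator_of_notMem
    (fun h : ∀ j ≤ t, j ∉ s => h k (not_lt.1 (mem_range.not.1 ht)) hk) _]
  calc ∑ t ∈ range k, {t | ∀ j ≤ t, j ∉ s}.indicator 1 t ≤ ∑ _t ∈ range k, (1 : ℝ≥0∞) :=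
        sum_le_sum fun t _ => Set.indicator_le_self' (fun _ _ => zero_le_one) t
    _ = k := by simp

theorem tsum_measure_le_lintegral_sInf {Ω : Type*} [MeasurableSpace Ω] (P : Measure Ω)
    {E : ℕ → Set Ω} (hE : ∀ k, MeasurableSet (E k)) :
    ∑' t, P {ω | ∀ j ≤ t, ω ∉ E j}
      ≤ ∫⁻ ω, sInf ((fun k : ℕ => (k : ℝ≥0∞)) '' {k | ω ∈ E k}) ∂P := by
  have hmeas t : MeasurableSet {ω | ∀ j ≤ t, ω ∉ E j} := by
    simp only [Set.ofPred_forall]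
    exact .iInter fun j => .iInter fun _ => (hE j).compl
  calc ∑' t, P {ω | ∀ j ≤ t, ω ∉ E j}
      = ∫⁻ ω, ∑' t, {ω | ∀ j ≤ t, ω ∉ E j}.indicator 1 ω ∂P := by
        rw [lintegral_tsum fun t => (measurable_one.indicator (hmeas t)).aemeasurable]
        simp only [lintegral_indicator_one (hmeas _)]
    _ ≤ _ := lintegral_mono fun ω => tsum_indicator_le_sInf_natCast_image {k | ω ∈ E k}

section Cusum

variable {Ω : Type*} {mΩ : MeasurableSpace Ω} {P : Measure Ω} [IsProbabilityMeasure P]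
  {Z C : ℕ → Ω → ℝ} {c : ℝ}

theorem measurable_cusum_pastFiltration (hZ : ∀ i, Measurable (Z i)) (hC0 : ∀ x, C 0 x = 0)
    (hC : ∀ k x, C (k + 1) x = max 0 (C k x + Z k x)) {j t : ℕ} (hjt : j ≤ t) :
    Measurable[pastFiltration Z hZ t] (C j) := by
  induction j with
  | zero => exact funext hC0 ▸ measurable_const
  | succ j ih =>
    rw [show C (j + 1) = fun x => max 0 (C j x + Z j x) from funext (hC j)]
    exact measurable_const.max ((ih (by omega)).add (measurable_iSup_comap (Set.mem_Iio.2 hjt)))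

theorem measurable_cusum (hZ : ∀ i, Measurable (Z i)) (hC0 : ∀ x, C 0 x = 0)
    (hC : ∀ k x, C (k + 1) x = max 0 (C k x + Z k x)) (k : ℕ) : Measurable (C k) :=
  (measurable_cusum_pastFiltration hZ hC0 hC le_rfl).mono ((pastFiltration Z hZ).le k) le_rfl

theorem ofReal_exp_mul_measure_exists_le_cusum_le (hZ : ∀ i, Measurable (Z i))
    (hindep : iIndepFun Z P) {θ : ℝ} (hθ : 0 ≤ θ) (hmgf : ∀ i, mgf (Z i) P θ = 1)
    (hC0 : ∀ x, C 0 x = 0) (hC : ∀ k x, C (k + 1) x = max 0 (C k x + Z k x)) (hc : 0 < c) :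
    ENNReal.ofReal (exp (θ * c)) * P {ω | ∃ k, c ≤ C k ω}
      ≤ ∑' t, P {ω | ∀ j ≤ t, ¬ c ≤ C j ω} := by
  set past : ℕ → Set Ω := fun t => {ω | ∀ j ≤ t, ¬ c ≤ C j ω}
  set future : ℕ → Set Ω := fun t => {ω | ∃ m, c ≤ ∑ i ∈ range m, Z (t + i) ω}
  have hcover : {ω | ∃ k, c ≤ C k ω} ⊆ ⋃ t, past t ∩ future t := by
    rintro ω ⟨k, hk⟩
    obtain ⟨t, hpast, hfuture⟩ :=
      exists_partialSum_ge_of_le_cusum (C := (C · ω)) (hC0 ω) (fun k => hC k ω) hc hk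
    exact Set.mem_iUnion.2 ⟨t, hpast, hfuture⟩
  have hindep_t t : P (past t ∩ future t) = P (past t) * P (future t) := by
    refine hindep.measure_inter_eq_mul_of_past_future hZ (t := t) ?_ ?_
    · simp only [past, Set.ofPred_forall]
      exact .iInter fun j => .iInter fun hj => (measurableSet_le measurable_const
        (measurable_cusum_pastFiltration hZ hC0 hC hj)).compl
    · simp only [future, Set.ofPred_exists]
      exact .iUnion fun m => measurableSet_le measurable_const (Finset.measurable_sum _
        fun i _ => measurable_iSup_comap (Set.mem_Ici.2 (Nat.le_add_right t i)))
  have hfuture t : ENNReal.ofReal (exp (θ * c)) * P (future t) ≤ 1 :=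
    ofReal_exp_mul_measure_exists_le_partialSum_le_one (fun i => hZ (t + i))
      (hindep.precomp (add_right_injective t)) hθ (fun i => hmgf (t + i)) c
  calc ENNReal.ofReal (exp (θ * c)) * P {ω | ∃ k, c ≤ C k ω}
      ≤ ENNReal.ofReal (exp (θ * c)) * ∑' t, P (past t ∩ future t) := by
        gcongr; exact (measure_mono hcover).trans (measure_iUnion_le _)
    _ = ∑' t, P (past t) * (ENNReal.ofReal (exp (θ * c)) * P (future t)) := by
        rw [← ENNReal.tsum_mul_left]; simp only [hindep_t, mul_left_comm]
    _ ≤ ∑' t, P (past t) :=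
        ENNReal.tsum_le_tsum fun t => mul_le_of_le_one_right' (hfuture t)

theorem ofReal_exp_mul_le_tsum_measure_forall_not_le_cusum (hZ : ∀ i, Measurable (Z i))
    (hindep : iIndepFun Z P) {θ : ℝ} (hθ : 0 ≤ θ) (hmgf : ∀ i, mgf (Z i) P θ = 1)
    (hC0 : ∀ x, C 0 x = 0) (hC : ∀ k x, C (k + 1) x = max 0 (C k x + Z k x)) (hc : 0 < c) :
    ENNReal.ofReal (exp (θ * c)) ≤ ∑' t, P {ω | ∀ j ≤ t, ¬ c ≤ C j ω} := by
  by_cases hnever : P {ω | ∀ k, ¬ c ≤ C k ω} = 0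
  · have hcross : P {ω | ∃ k, c ≤ C k ω} = 1 := by
      refine (prob_compl_eq_zero_iff ?_).1 (by simpa only [Set.compl_ofPred, not_exists])
      simp only [Set.ofPred_exists]
      exact .iUnion fun k => measurableSet_le measurable_const (measurable_cusum hZ hC0 hC k)
    simpa [hcross] using
      ofReal_exp_mul_measure_exists_le_cusum_le hZ hindep hθ hmgf hC0 hC hc
  · calc ENNReal.ofReal (exp (θ * c)) ≤ ∑' _ : ℕ, P {ω | ∀ k, ¬ c ≤ C k ω} := by
          rw [ENNReal.tsum_const_eq_top_of_ne_zero hnever]; exact le_top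
      _ ≤ ∑' t, P {ω | ∀ j ≤ t, ¬ c ≤ C j ω} :=
        ENNReal.tsum_le_tsum fun t => measure_mono fun ω hω j _ => hω j

end Cusum

theorem cusum_mean_crossing_time_lower_bound_general
    {Ω : Type*} [MeasurableSpace Ω] (P : Measure Ω) [IsProbabilityMeasure P]
    (Z : ℕ → Ω → ℝ) (hmeas : ∀ n, Measurable (Z n))
    (hindep : iIndepFun Z P)
    (hident : ∀ n, P.map (Z n) = P.map (Z 0))
    (ω₀ : ℝ) (hω₀ : 0 < ω₀)
    (hmgf : ∫ x, Real.exp (ω₀ * Z 0 x) ∂P = 1)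
    (C : ℕ → Ω → ℝ)
    (hC0 : ∀ x, C 0 x = 0)
    (hCrec : ∀ k x, C (k + 1) x = max 0 (C k x + Z k x))
    (c : ℝ) (hc : 0 < c)
    (τ : Ω → ℝ≥0∞)
    (hτ : ∀ x, τ x = sInf ((fun k : ℕ => (k : ℝ≥0∞)) '' {k | c ≤ C k x})) :
    ENNReal.ofReal (Real.exp (ω₀ * c)) ≤ ∫⁻ x, τ x ∂P := by
  have hmgf_eq n : mgf (Z n) P ω₀ = 1 :=
    (congrFun (mgf_congr_identDistrib
      ⟨(hmeas n).aemeasurable, (hmeas 0).aemeasurable, hident n⟩) ω₀).trans hmgf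
  calc ENNReal.ofReal (exp (ω₀ * c)) ≤ ∑' t, P {ω | ∀ j ≤ t, ¬ c ≤ C j ω} :=
        ofReal_exp_mul_le_tsum_measure_forall_not_le_cusum hmeas hindep hω₀.le hmgf_eq hC0 hCrec
          hc
    _ ≤ ∫⁻ ω, sInf ((fun k : ℕ => (k : ℝ≥0∞)) '' {k | c ≤ C k ω}) ∂P :=
        tsum_measure_le_lintegral_sInf P (E := fun k => {ω | c ≤ C k ω})
          fun k => measurableSet_le measurable_const (measurable_cusum hmeas hC0 hCrec k)
    _ = ∫⁻ ω, τ ω ∂P := lintegral_congr fun ω => (hτ ω).symm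

/-- If the i.i.d. CUSUM increments `Z` have negative mean and satisfy
`E[exp(ω₀ Z₁)] = 1` for some `ω₀ ∈ (0,1)`, then the first time `τ` at which
the CUSUM statistic reaches the threshold `c > 0` satisfies
`E[τ] ≥ exp(ω₀ c)`. -/
theorem cusum_mean_crossing_time_lower_bound
    {Ω : Type*} [MeasurableSpace Ω] (P : Measure Ω) [IsProbabilityMeasure P]
    (Z : ℕ → Ω → ℝ) (hmeas : ∀ n, Measurable (Z n))
    (hindep : iIndepFun Z P)
    (hident : ∀ n, P.map (Z n) = P.map (Z 0))
    (hint : Integrable (Z 0) P) (hmean : ∫ x, Z 0 x ∂P < 0)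
    (ω₀ : ℝ) (hω₀ : 0 < ω₀) (hω₀' : ω₀ < 1)
    (hmgf : ∫ x, Real.exp (ω₀ * Z 0 x) ∂P = 1)
    (C : ℕ → Ω → ℝ)
    (hC0 : ∀ x, C 0 x = 0)
    (hCrec : ∀ k x, C (k + 1) x = max 0 (C k x + Z k x))
    (c : ℝ) (hc : 0 < c)
    (τ : Ω → ℝ≥0∞)
    (hτ : ∀ x, τ x = sInf ((fun k : ℕ => (k : ℝ≥0∞)) '' {k | c ≤ C k x})) :
    ENNReal.ofReal (Real.exp (ω₀ * c)) ≤ ∫⁻ x, τ x ∂P :=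
  cusum_mean_crossing_time_lower_bound_general P Z hmeas hindep hident ω₀ hω₀ hmgf C hC0 hCrec c hc
    τ hτ
end
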